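/- Let κ > 0 be a real number and for t > 0 set α(t) = ∫₀^{κ√t} e^{-r²/2} dr. Then for every t > 0: ∫₀^∞ e^{-r²/(2t)} r³ sinh(κr) dr = √(π/2) κ t^{5/2}(κ²t + 3) e^{κ²t/2}, and ∫₀^∞ e^{-r²/(2t)} r³ cosh(κr) dr = t²(κ²t + 2) + κ t^{5/2}(κ²t + 3) e^{κ²t/2} α(t). -/

import Mathlib

/-!
Completing the square, `e^{-r²/(2t)} e^{κr} = e^{κ²t/2} e^{-(r-κt)²/(2t)}`, turns the integrand
`r³ e^{-r²/(2t)} e^{κr}` into `e^{κ²t/2} (u + κt)³ e^{-u²/(2t)}` with `u = r - κt`. Integrating by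
parts with `(e^{-u²/(2t)})' = -(u/t) e^{-u²/(2t)}` gives an antiderivative of the latter in closed
form up to the Gaussian primitive `∫₀ᵘ e^{-s²/(2t)} ds`, whose limit at `∞` is `√(πt/2)`. The
integrand is nonnegative on `(0, ∞)`, so the improper integral is that limit minus the value at
`0`, for either sign of `κ`; `sinh` and `cosh` are the half-difference and half-sum of the two
signs, and the Gaussian primitive at `κt` rescales to `√t · α(t)`.
-/

open Real MeasureTheory Filter Set Topology

noncomputable def gaussPrimitive (t x : ℝ) : ℝ := ∫ s in (0 : ℝ)..x, exp (-s ^ 2 / (2 * t))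

lemma hasDerivAt_gaussPrimitive (t x : ℝ) :
    HasDerivAt (gaussPrimitive t) (exp (-x ^ 2 / (2 * t))) x :=
  (Continuous.integral_hasStrictDerivAt (by fun_prop) 0 x).hasDerivAt

lemma gaussPrimitive_neg (t x : ℝ) : gaussPrimitive t (-x) = -gaussPrimitive t x := by
  have h := intervalIntegral.integral_comp_neg (a := x) (b := 0) fun s => exp (-s ^ 2 / (2 * t))
  simp only [neg_sq, neg_zero] at h
  rw [gaussPrimitive, ← h, intervalIntegral.integral_symm, gaussPrimitive]

lemma tendsto_gaussPrimitive_atTop {t : ℝ} (ht : 0 < t) :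
    Tendsto (gaussPrimitive t) atTop (𝓝 √(π * t / 2)) := by
  have hexp : (fun s : ℝ => exp (-s ^ 2 / (2 * t))) = fun s => exp (-(2 * t)⁻¹ * s ^ 2) := by
    ext s; ring_nf
  have hint : IntegrableOn (fun s : ℝ => exp (-s ^ 2 / (2 * t))) (Ioi 0) := by
    rw [hexp]; exact (integrable_exp_neg_mul_sq (by positivity)).integrableOn
  have hlim : ∫ s in Ioi (0 : ℝ), exp (-s ^ 2 / (2 * t)) = √(π * t / 2) := by
    rw [hexp, integral_gaussian_Ioi, show π / (2 * t)⁻¹ = 2 ^ 2 * (π * t / 2) by field_simp,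
      sqrt_mul (by positivity), sqrt_sq zero_le_two]
    ring
  exact hlim ▸ intervalIntegral_tendsto_integral_Ioi 0 hint tendsto_id

lemma gaussPrimitive_mul_sqrt {t : ℝ} (ht : 0 < t) (x : ℝ) :
    gaussPrimitive t (x * √t) = √t * ∫ r in (0 : ℝ)..x, exp (-r ^ 2 / 2) := by
  have h := intervalIntegral.integral_comp_mul_right (a := 0) (b := x)
    (fun s => exp (-s ^ 2 / (2 * t))) (sqrt_ne_zero'.2 ht)
  have hscale : ∀ r : ℝ, -(r * √t) ^ 2 / (2 * t) = -r ^ 2 / 2 := fun r => by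
    rw [mul_pow, sq_sqrt ht.le]; field_simp
  simp only [hscale, zero_mul, smul_eq_mul] at h
  rw [h, gaussPrimitive, ← mul_assoc, mul_inv_cancel₀ (sqrt_ne_zero'.2 ht), one_mul]

lemma tendsto_pow_mul_exp_neg_sq_div_atTop {t : ℝ} (ht : 0 < t) (n : ℕ) :
    Tendsto (fun s : ℝ => s ^ n * exp (-s ^ 2 / (2 * t))) atTop (𝓝 0) := by
  have h := rpow_mul_exp_neg_mul_sq_isLittleO_exp_neg (b := (2 * t)⁻¹) (by positivity) n
  refine (h.trans_tendsto ?_).congr' ?_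
  · exact tendsto_exp_atBot.comp (tendsto_id.const_mul_atTop_of_neg (by norm_num))
  · filter_upwards [eventually_gt_atTop 0] with s hs
    rw [rpow_natCast]; ring_nf

noncomputable def cubeGaussAntideriv (c t u : ℝ) : ℝ :=
  -t * (u ^ 2 + 3 * c * u + 3 * c ^ 2 + 2 * t) * exp (-u ^ 2 / (2 * t)) +
    c * (c ^ 2 + 3 * t) * gaussPrimitive t u

lemma hasDerivAt_cubeGaussAntideriv (c : ℝ) {t : ℝ} (ht : t ≠ 0) (u : ℝ) :
    HasDerivAt (cubeGaussAntideriv c t) ((u + c) ^ 3 * exp (-u ^ 2 / (2 * t))) u := by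
  have hpoly : HasDerivAt (fun u : ℝ => -t * (u ^ 2 + 3 * c * u + 3 * c ^ 2 + 2 * t))
      (-t * (2 * u + 3 * c)) u := by
    refine (((((hasDerivAt_pow 2 u).add ((hasDerivAt_id u).const_mul (3 * c))).add_const
      (3 * c ^ 2)).add_const (2 * t)).const_mul (-t)).congr_deriv ?_
    norm_num
  have hgauss : HasDerivAt (fun u : ℝ => exp (-u ^ 2 / (2 * t)))
      (exp (-u ^ 2 / (2 * t)) * (-u / t)) u := by
    refine ((hasDerivAt_pow 2 u).neg.div_const (2 * t)).exp.congr_deriv ?_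
    simp only [Pi.neg_apply, neg_div]
    field_simp
    ring
  refine ((hpoly.mul hgauss).add
    ((hasDerivAt_gaussPrimitive t u).const_mul (c * (c ^ 2 + 3 * t)))).congr_deriv ?_
  field_simp
  ring

lemma tendsto_cubeGaussAntideriv_atTop (c : ℝ) {t : ℝ} (ht : 0 < t) :
    Tendsto (cubeGaussAntideriv c t) atTop (𝓝 (c * (c ^ 2 + 3 * t) * √(π * t / 2))) := by
  have hdecay := ((tendsto_pow_mul_exp_neg_sq_div_atTop ht 2).add
    (((tendsto_pow_mul_exp_neg_sq_div_atTop ht 1).const_mul (3 * c)).add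
      ((tendsto_pow_mul_exp_neg_sq_div_atTop ht 0).const_mul (3 * c ^ 2 + 2 * t)))).const_mul (-t)
  convert hdecay.add ((tendsto_gaussPrimitive_atTop ht).const_mul (c * (c ^ 2 + 3 * t))) using 1
  · ext u; simp only [cubeGaussAntideriv]; ring
  · simp

lemma exp_neg_sq_div_mul_exp (κ : ℝ) {t : ℝ} (ht : t ≠ 0) (r : ℝ) :
    exp (-r ^ 2 / (2 * t)) * exp (κ * r) =
      exp (κ ^ 2 * t / 2) * exp (-(r - κ * t) ^ 2 / (2 * t)) := by
  rw [← exp_add, ← exp_add]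
  congr 1
  field_simp
  ring

section

variable (κ : ℝ) {t : ℝ}

lemma hasDerivAt_exp_mul_cubeGaussAntideriv_sub (ht : t ≠ 0) (r : ℝ) :
    HasDerivAt (fun r => exp (κ ^ 2 * t / 2) * cubeGaussAntideriv (κ * t) t (r - κ * t))
      (exp (-r ^ 2 / (2 * t)) * r ^ 3 * exp (κ * r)) r := by
  refine (((hasDerivAt_cubeGaussAntideriv (κ * t) ht (r - κ * t)).comp_sub_const r
    (κ * t)).const_mul (exp (κ ^ 2 * t / 2))).congr_deriv ?_
  rw [sub_add_cancel, mul_right_comm, exp_neg_sq_div_mul_exp κ ht]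
  ring

lemma integrableOn_and_integral_Ioi_gaussian_cube_exp (ht : 0 < t) :
    IntegrableOn (fun r => exp (-r ^ 2 / (2 * t)) * r ^ 3 * exp (κ * r)) (Ioi 0) ∧
      ∫ r in Ioi 0, exp (-r ^ 2 / (2 * t)) * r ^ 3 * exp (κ * r) =
        t ^ 2 * (κ ^ 2 * t + 2) + κ * t ^ 2 * (κ ^ 2 * t + 3) * exp (κ ^ 2 * t / 2) *
          (√(π * t / 2) + gaussPrimitive t (κ * t)) := by
  have hderiv : ∀ r ∈ Ici (0 : ℝ), HasDerivAt _ _ r := fun r _ =>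
    hasDerivAt_exp_mul_cubeGaussAntideriv_sub κ ht.ne' r
  have hnonneg : ∀ r ∈ Ioi (0 : ℝ), 0 ≤ exp (-r ^ 2 / (2 * t)) * r ^ 3 * exp (κ * r) :=
    fun r (hr : 0 < r) => by positivity
  have hlim := ((tendsto_cubeGaussAntideriv_atTop (κ * t) ht).comp
    (tendsto_atTop_add_const_right _ (-(κ * t)) tendsto_id)).const_mul (exp (κ ^ 2 * t / 2))
  refine ⟨integrableOn_Ioi_deriv_of_nonneg' hderiv hnonneg hlim, ?_⟩
  rw [integral_Ioi_of_hasDerivAt_of_nonneg' hderiv hnonneg hlim]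
  have hcancel : exp (κ ^ 2 * t / 2) * exp (-(κ * t) ^ 2 / (2 * t)) = 1 := by
    rw [← exp_add, ← exp_zero]
    congr 1
    field_simp
    ring
  simp only [cubeGaussAntideriv, zero_sub, gaussPrimitive_neg, neg_sq]
  linear_combination (t * (κ ^ 2 * t ^ 2 + 2 * t)) * hcancel

end

theorem heat_integrals_order_three_general (κ : ℝ) (t : ℝ) (ht : 0 < t) :
    (∫ r in Set.Ioi (0 : ℝ), Real.exp (-r ^ 2 / (2 * t)) * r ^ 3 * Real.sinh (κ * r)) =
      Real.sqrt (π / 2) * κ * t ^ ((5 : ℝ) / 2) * (κ ^ 2 * t + 3) * Real.exp (κ ^ 2 * t / 2) ∧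
    (∫ r in Set.Ioi (0 : ℝ), Real.exp (-r ^ 2 / (2 * t)) * r ^ 3 * Real.cosh (κ * r)) =
      t ^ 2 * (κ ^ 2 * t + 2) + κ * t ^ ((5 : ℝ) / 2) * (κ ^ 2 * t + 3) *
        Real.exp (κ ^ 2 * t / 2) *
        (∫ r in (0 : ℝ)..(κ * Real.sqrt t), Real.exp (-r ^ 2 / 2)) := by
  obtain ⟨hintPos, hvalPos⟩ := integrableOn_and_integral_Ioi_gaussian_cube_exp κ ht
  obtain ⟨hintNeg, hvalNeg⟩ := integrableOn_and_integral_Ioi_gaussian_cube_exp (-κ) ht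
  have hsinh (r : ℝ) : exp (-r ^ 2 / (2 * t)) * r ^ 3 * sinh (κ * r) =
      (exp (-r ^ 2 / (2 * t)) * r ^ 3 * exp (κ * r) -
        exp (-r ^ 2 / (2 * t)) * r ^ 3 * exp (-κ * r)) / 2 := by
    rw [sinh_eq, neg_mul]; ring
  have hcosh (r : ℝ) : exp (-r ^ 2 / (2 * t)) * r ^ 3 * cosh (κ * r) =
      (exp (-r ^ 2 / (2 * t)) * r ^ 3 * exp (κ * r) +
        exp (-r ^ 2 / (2 * t)) * r ^ 3 * exp (-κ * r)) / 2 := by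
    rw [cosh_eq, neg_mul]; ring
  have hα : gaussPrimitive t (κ * t) = √t * ∫ r in (0 : ℝ)..(κ * √t), exp (-r ^ 2 / 2) := by
    rw [← gaussPrimitive_mul_sqrt ht, mul_assoc, mul_self_sqrt ht.le]
  have ht52 : t ^ ((5 : ℝ) / 2) = t ^ 2 * √t := by
    rw [sqrt_eq_rpow, ← rpow_natCast, ← rpow_add ht]
    norm_num
  have hsqrt : √(π * t / 2) = √(π / 2) * √t := by
    rw [← sqrt_mul (by positivity), div_mul_eq_mul_div]
  simp only [hsinh, hcosh, integral_div]
  rw [integral_sub hintPos hintNeg, integral_add hintPos hintNeg, hvalPos, hvalNeg]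
  simp only [neg_sq, neg_mul, gaussPrimitive_neg, hα, ht52, hsqrt]
  constructor <;> ring

/-- For `κ > 0` and `t > 0`, with `α(t) = ∫₀^{κ√t} e^{-r²/2} dr`,
`∫₀^∞ e^{-r²/(2t)} r³ sinh(κr) dr = √(π/2) κ t^{5/2}(κ²t+3)e^{κ²t/2}` and
`∫₀^∞ e^{-r²/(2t)} r³ cosh(κr) dr = t²(κ²t+2) + κ t^{5/2}(κ²t+3)e^{κ²t/2} α(t)`. -/
theorem heat_integrals_order_three (κ : ℝ) (hκ : 0 < κ) (t : ℝ) (ht : 0 < t) :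
    (∫ r in Set.Ioi (0 : ℝ), Real.exp (-r ^ 2 / (2 * t)) * r ^ 3 * Real.sinh (κ * r)) =
      Real.sqrt (π / 2) * κ * t ^ ((5 : ℝ) / 2) * (κ ^ 2 * t + 3) * Real.exp (κ ^ 2 * t / 2) ∧
    (∫ r in Set.Ioi (0 : ℝ), Real.exp (-r ^ 2 / (2 * t)) * r ^ 3 * Real.cosh (κ * r)) =
      t ^ 2 * (κ ^ 2 * t + 2) + κ * t ^ ((5 : ℝ) / 2) * (κ ^ 2 * t + 3) *
        Real.exp (κ ^ 2 * t / 2) *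
        (∫ r in (0 : ℝ)..(κ * Real.sqrt t), Real.exp (-r ^ 2 / 2)) :=
  heat_integrals_order_three_general κ t ht
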